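/- Let E and F be finite directed graphs with no sinks. If T_E is ℤ-monoid isomorphic to T_F, then the adjacency matrices A_E and A_F are shift equivalent, i.e., there exist a positive integer l and nonnegative integer matrices R and S such that A_E R = R A_F, S A_E = A_F S, A_E^l = RS and A_F^l = SR. -/

import Mathlib

/-- A directed graph: a set of vertices `V`, a set of edges `Ed`,
and source and range maps. -/
structure DGraph (V : Type) (Ed : Type) where
  s : Ed → V
  r : Ed → V

namespace DGraph

variable {V Ed : Type} (G : DGraph V Ed)

/-- A sink is a vertex emitting no edges. -/
def IsSink (v : V) : Prop := ∀ e : Ed, G.s e ≠ v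

/-- A source is a vertex receiving no edges. -/
def IsSource (v : V) : Prop := ∀ e : Ed, G.r e ≠ v

/-- A graph is row-finite if every vertex emits finitely many edges. -/
def RowFinite : Prop := ∀ v : V, {e : Ed | G.s e = v}.Finite

theorem rowFinite_of_finite [Finite Ed] : G.RowFinite := fun _ => Set.toFinite _

/-- There is an edge from `u` to `w`. -/
def Step (u w : V) : Prop := ∃ e : Ed, G.s e = u ∧ G.r e = w

/-- `u` flows to `w`: `u = w` or there is a path from `u` to `w`. -/
def FlowsTo (u w : V) : Prop := Relation.ReflTransGen G.Step u w

/-- Strongly connected graph. -/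
def StronglyConnected : Prop := ∀ u w : V, G.FlowsTo u w

/-- A (finite) path of length `≥ 1`: a nonempty list of consecutive edges. -/
structure GPath (G : DGraph V Ed) where
  edges : List Ed
  ne : edges ≠ []
  chain : edges.Chain' (fun e f => G.r e = G.s f)

namespace GPath

variable {G}

/-- The source of a path. -/
def src (p : G.GPath) : V := G.s (p.edges.head p.ne)

/-- The range of a path. -/
def tgt (p : G.GPath) : V := G.r (p.edges.getLast p.ne)

/-- The length of a path. -/
def length (p : G.GPath) : ℕ := p.edges.length

/-- The set of vertices of a path (the sources of its edges). -/
def vset (p : G.GPath) : Set V := {v | ∃ e ∈ p.edges, G.s e = v}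

/-- A cycle: a closed path with pairwise distinct edges. -/
def IsCycle (p : G.GPath) : Prop := p.src = p.tgt ∧ p.edges.Nodup

/-- The path (cycle) has an exit: an edge `f` with `s f = s eᵢ` but `f ≠ eᵢ`. -/
def HasExit (p : G.GPath) : Prop := ∃ (f e : Ed), e ∈ p.edges ∧ G.s f = G.s e ∧ f ≠ e

/-- An extreme cycle: a cycle with an exit such that every path leaving it returns to it. -/
def IsExtremeCycle (p : G.GPath) : Prop :=
  p.IsCycle ∧ p.HasExit ∧
    ∀ lam : G.GPath, lam.src ∈ p.vset → ∃ w ∈ p.vset, G.FlowsTo lam.tgt w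

end GPath

/-- Lengths of closed paths based at `v`. -/
def closedLens (v : V) : Set ℕ :=
  {n | ∃ p : G.GPath, p.src = v ∧ p.tgt = v ∧ p.length = n}

/-- `d` is the period of `v`: the greatest common divisor of the lengths of closed
paths based at `v`. -/
def IsPeriodOf (d : ℕ) (v : V) : Prop :=
  (∀ n ∈ G.closedLens v, d ∣ n) ∧ ∀ k : ℕ, (∀ n ∈ G.closedLens v, k ∣ n) → k ∣ d

/-- A line point: no vertex that `v` flows to has a bifurcation or lies on a closed path. -/
def LinePoint (v : V) : Prop :=
  ∀ w : V, G.FlowsTo v w →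
    (∀ e f : Ed, G.s e = w → G.s f = w → e = f) ∧
      ¬ ∃ p : G.GPath, p.src = w ∧ p.tgt = w

end DGraph

section MonoidOrder

variable {M : Type} [AddCommMonoid M]

/-- The algebraic preorder on a commutative monoid: `a ≤ b` iff `a + c = b` for some `c`. -/
def MLe (a b : M) : Prop := ∃ c : M, a + c = b

/-- An order ideal of a commutative monoid. -/
structure IsOrderIdeal (I : Set M) : Prop where
  zero_mem : (0 : M) ∈ I
  add_mem : ∀ {a b : M}, a ∈ I → b ∈ I → a + b ∈ I
  mem_of_le : ∀ {a b : M}, b ∈ I → MLe a b → a ∈ I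

/-- The order ideal generated by an element `x`: all `y` with `y ≤ n • x` for some `n`. -/
def orderIdealGen (x : M) : Set M := {y | ∃ n : ℕ, MLe y (n • x)}

/-- A simple order ideal: a nonzero order ideal whose only order sub-ideals are `0` and itself. -/
def IsSimpleOrderIdeal (I : Set M) : Prop :=
  IsOrderIdeal I ∧ I ≠ {0} ∧ ∀ J : Set M, IsOrderIdeal J → J ⊆ I → J = {0} ∨ J = I

/-- The nonzero elements of `I` form a group under addition. -/
def NonzeroGroup (I : Set M) : Prop :=
  (∀ x ∈ I, ∀ y ∈ I, x ≠ 0 → y ≠ 0 → x + y ≠ 0) ∧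
    ∃ e ∈ I, e ≠ (0 : M) ∧ (∀ x ∈ I, x ≠ 0 → e + x = x) ∧
      ∀ x ∈ I, x ≠ 0 → ∃ y ∈ I, y ≠ 0 ∧ x + y = e

/-- The congruence on a commutative monoid associated to an ideal `I`:
`a ≈ b` iff `a + c = b + d` for some `c, d ∈ I`. -/
def idealCon (I : Set M) (h0 : (0 : M) ∈ I)
    (hadd : ∀ {a b : M}, a ∈ I → b ∈ I → a + b ∈ I) : AddCon M where
  r a b := ∃ c ∈ I, ∃ d ∈ I, a + c = b + d
  iseqv := by
    refine ⟨fun a => ⟨0, h0, 0, h0, rfl⟩, ?_, ?_⟩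
    · rintro a b ⟨c, hc, d, hd, h⟩
      exact ⟨d, hd, c, hc, h.symm⟩
    · rintro a b c ⟨x, hx, y, hy, h1⟩ ⟨x', hx', y', hy', h2⟩
      refine ⟨x + x', hadd hx hx', y' + y, hadd hy' hy, ?_⟩
      calc a + (x + x') = (a + x) + x' := (add_assoc _ _ _).symm
        _ = (b + y) + x' := by rw [h1]
        _ = (b + x') + y := by rw [add_right_comm]
        _ = (c + y') + y := by rw [h2]
        _ = c + (y' + y) := add_assoc _ _ _
  add' := by
    rintro a b a' b' ⟨c, hc, d, hd, h1⟩ ⟨c', hc', d', hd', h2⟩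
    refine ⟨c + c', hadd hc hc', d + d', hadd hd hd', ?_⟩
    rw [add_add_add_comm, h1, h2, add_add_add_comm]

end MonoidOrder

namespace DGraph

variable {V Ed : Type} (G : DGraph V Ed)

/-- The defining relations of the talented monoid, as a relation on the free
commutative monoid on `E⁰ × ℤ`. -/
def talRel (hrf : G.RowFinite) (a b : (V × ℤ) →₀ ℕ) : Prop :=
  ∃ (v : V) (i : ℤ), ¬ G.IsSink v ∧ a = Finsupp.single (v, i) 1 ∧
    b = ∑ e ∈ (hrf v).toFinset, Finsupp.single (G.r e, i + 1) 1

/-- The congruence generated by the defining relations of the talented monoid. -/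
noncomputable def talCon (hrf : G.RowFinite) : AddCon ((V × ℤ) →₀ ℕ) := addConGen (G.talRel hrf)

/-- The talented monoid `T_E` of a row-finite graph. -/
noncomputable def Tal (hrf : G.RowFinite) : Type := (G.talCon hrf).Quotient

noncomputable instance (hrf : G.RowFinite) : AddCommMonoid (G.Tal hrf) :=
  inferInstanceAs (AddCommMonoid (G.talCon hrf).Quotient)

/-- The generator `v(i)` of the talented monoid. -/
noncomputable def gen (hrf : G.RowFinite) (v : V) (i : ℤ) : G.Tal hrf :=
  (G.talCon hrf).mk' (Finsupp.single (v, i) 1)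

/-- The action of `n : ℤ` on the talented monoid, determined by `ⁿv(i) = v(i+n)`. -/
noncomputable def shift (hrf : G.RowFinite) (n : ℤ) : G.Tal hrf →+ G.Tal hrf :=
  AddCon.lift _
    ((AddCon.mk' _).comp
      (Finsupp.mapDomain.addMonoidHom (fun p : V × ℤ => (p.1, p.2 + n))))
    (by
      refine AddCon.addConGen_le.mpr fun a b hab => ?_
      rcases hab with ⟨v, i, hv, rfl, rfl⟩
      refine (AddCon.ker_rel _).mpr ?_
      show (G.talCon hrf).mk'
            (Finsupp.mapDomain (fun p : V × ℤ => (p.1, p.2 + n)) (Finsupp.single (v, i) 1)) =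
          (G.talCon hrf).mk'
            (Finsupp.mapDomain (fun p : V × ℤ => (p.1, p.2 + n))
              (∑ e ∈ (hrf v).toFinset, Finsupp.single (G.r e, i + 1) 1))
      rw [Finsupp.mapDomain_single, Finsupp.mapDomain_finset_sum]
      simp only [Finsupp.mapDomain_single]
      refine (AddCon.eq (G.talCon hrf)).mpr ?_
      refine AddConGen.Rel.of _ _ ⟨v, i + n, hv, rfl, ?_⟩
      exact Finset.sum_congr rfl fun e _ => by rw [add_right_comm])

end DGraph


namespace DGraph

variable {V Ed : Type} (G : DGraph V Ed)

/-- A ℤ-order ideal of the talented monoid: an order ideal closed under the ℤ-action. -/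
def IsZOrderIdeal (hrf : G.RowFinite) (I : Set (G.Tal hrf)) : Prop :=
  IsOrderIdeal I ∧ ∀ (n : ℤ) (x : G.Tal hrf), x ∈ I → G.shift hrf n x ∈ I

/-- The ℤ-order ideal generated by a set `S`. -/
def zIdealGen (hrf : G.RowFinite) (S : Set (G.Tal hrf)) : Set (G.Tal hrf) :=
  ⋂₀ {I : Set (G.Tal hrf) | G.IsZOrderIdeal hrf I ∧ S ⊆ I}

/-- A simple ℤ-order ideal: a nonzero ℤ-order ideal whose only ℤ-order sub-ideals
are `0` and itself. -/
def IsSimpleZIdeal (hrf : G.RowFinite) (I : Set (G.Tal hrf)) : Prop :=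
  G.IsZOrderIdeal hrf I ∧ I ≠ {0} ∧
    ∀ J : Set (G.Tal hrf), G.IsZOrderIdeal hrf J → J ⊆ I → J = {0} ∨ J = I

/-- The adjacency matrix of a graph: the `(u, w)` entry is the number of edges
from `u` to `w`. -/
noncomputable def adj : Matrix V V ℕ := Matrix.of fun u w => Nat.card {e : Ed // G.s e = u ∧ G.r e = w}

/-- The defining relations of the graph monoid `M_E`, as a relation on the free
commutative monoid on `E⁰`. -/
def gmRel (hrf : G.RowFinite) (a b : V →₀ ℕ) : Prop :=
  ∃ v : V, ¬ G.IsSink v ∧ a = Finsupp.single v 1 ∧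
    b = ∑ e ∈ (hrf v).toFinset, Finsupp.single (G.r e) 1

/-- The graph monoid `M_E` of a row-finite graph. -/
noncomputable def GM (hrf : G.RowFinite) : Type := (addConGen (G.gmRel hrf)).Quotient

noncomputable instance (hrf : G.RowFinite) : AddCommMonoid (G.GM hrf) :=
  inferInstanceAs (AddCommMonoid (addConGen (G.gmRel hrf)).Quotient)

/-- The smallest reflexive, transitive and additive relation on the free commutative
monoid on `E⁰` containing the defining relations of the graph monoid. -/
inductive FlowRel (hrf : G.RowFinite) : (V →₀ ℕ) → (V →₀ ℕ) → Prop
  | of {a b : V →₀ ℕ} : G.gmRel hrf a b → FlowRel hrf a b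
  | refl (a : V →₀ ℕ) : FlowRel hrf a a
  | trans {a b c : V →₀ ℕ} : FlowRel hrf a b → FlowRel hrf b c → FlowRel hrf a c
  | add_right {a b : V →₀ ℕ} (c : V →₀ ℕ) : FlowRel hrf a b → FlowRel hrf (a + c) (b + c)

/-- The quotient of the talented monoid by a ℤ-order ideal. -/
noncomputable def TalQuot (hrf : G.RowFinite) (I : Set (G.Tal hrf))
    (hI : G.IsZOrderIdeal hrf I) : Type :=
  (idealCon I hI.1.zero_mem (fun ha hb => hI.1.add_mem ha hb)).Quotient

noncomputable instance (hrf : G.RowFinite) (I : Set (G.Tal hrf))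
    (hI : G.IsZOrderIdeal hrf I) : AddCommMonoid (G.TalQuot hrf I hI) :=
  inferInstanceAs
    (AddCommMonoid (idealCon I hI.1.zero_mem (fun ha hb => hI.1.add_mem ha hb)).Quotient)

/-- The ℤ-action descends to the quotient of the talented monoid by a ℤ-order ideal. -/
noncomputable def qshift (hrf : G.RowFinite) (I : Set (G.Tal hrf))
    (hI : G.IsZOrderIdeal hrf I) (n : ℤ) : G.TalQuot hrf I hI →+ G.TalQuot hrf I hI :=
  AddCon.lift _
    ((AddCon.mk' (idealCon I hI.1.zero_mem (fun ha hb => hI.1.add_mem ha hb))).comp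
      (G.shift hrf n))
    (by
      rintro a b ⟨c, hc, d, hd, h⟩
      show AddCon.ker _ _ _
      refine (AddCon.ker_rel _).mpr ?_
      show (AddCon.mk' _) (G.shift hrf n a) = (AddCon.mk' _) (G.shift hrf n b)
      refine (AddCon.eq _).mpr ?_
      exact ⟨G.shift hrf n c, hI.2 n c hc, G.shift hrf n d, hI.2 n d hd, by
        rw [← map_add, ← map_add, h]⟩)

end DGraph

/-! ### Core development -/
open Matrix Finsupp
set_option linter.unusedSectionVars false

namespace DGraph
variable {V Ed : Type} [Fintype V] [Fintype Ed] [DecidableEq V] (G : DGraph V Ed)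

/-- The free element representing row vector `x` at level `k`. -/
noncomputable def rowAt (x : V → ℕ) (k : ℤ) : (V × ℤ) →₀ ℕ :=
  ∑ v, Finsupp.single (v, k) (x v)

lemma rowAt_add (x y : V → ℕ) (k : ℤ) : rowAt (x + y) k = rowAt x k + rowAt y k := by
  simp [rowAt, Finsupp.single_add, Finset.sum_add_distrib]

lemma rowAt_smul (n : ℕ) (x : V → ℕ) (k : ℤ) : rowAt (n • x) k = n • rowAt x k := by
  simp [rowAt, Finset.smul_sum, Finsupp.smul_single]

lemma rowAt_single (v : V) (k : ℤ) : rowAt (Pi.single v 1 : V → ℕ) k = Finsupp.single (v, k) 1 := by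
  rw [rowAt, Finset.sum_eq_single v]
  · simp
  · intro u _ hu; simp [Pi.single_apply, hu]
  · simp

lemma support_rowAt_le (x : V → ℕ) (k : ℤ) (p : V × ℤ) (hp : p ∈ (rowAt x k).support) :
    p.2 = k := by
  classical
  by_contra h
  have : (rowAt x k) p = 0 := by
    rw [rowAt]
    rw [Finsupp.finset_sum_apply]
    refine Finset.sum_eq_zero fun v _ => ?_
    rw [Finsupp.single_apply]
    rw [if_neg]
    rintro rfl; exact h rfl
  exact (Finsupp.mem_support_iff.mp hp) this

set_option linter.unusedSectionVars false

end DGraph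

/-- `vecMul` as an additive monoid hom. -/
noncomputable def vecMulHom {V W : Type} [Fintype V] (M : Matrix V W ℕ) : (V → ℕ) →+ (W → ℕ) where
  toFun x := x ᵥ* M
  map_zero' := Matrix.zero_vecMul M
  map_add' x y := Matrix.add_vecMul M x y

lemma vecMulHom_apply {V W : Type} [Fintype V] (M : Matrix V W ℕ) (x : V → ℕ) :
    vecMulHom M x = x ᵥ* M := rfl

namespace DGraph
variable {V Ed : Type} [Fintype V] [Fintype Ed] [DecidableEq V] (G : DGraph V Ed)

/-- Push a free element down to level `k` (intended when all its levels are `≤ k`). -/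
noncomputable def pushTo (k : ℤ) : ((V × ℤ) →₀ ℕ) →+ (V → ℕ) :=
  Finsupp.liftAddHom fun p =>
    (smulAddHom ℕ (V → ℕ)).flip ((Pi.single p.1 1 : V → ℕ) ᵥ* (G.adj ^ (k - p.2).toNat))

lemma pushTo_apply (k : ℤ) (a : (V × ℤ) →₀ ℕ) :
    G.pushTo k a = a.sum fun p n => n • ((Pi.single p.1 1 : V → ℕ) ᵥ* (G.adj ^ (k - p.2).toNat)) :=
  rfl

lemma pushTo_single (k : ℤ) (p : V × ℤ) (n : ℕ) :
    G.pushTo k (Finsupp.single p n)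
      = n • ((Pi.single p.1 1 : V → ℕ) ᵥ* (G.adj ^ (k - p.2).toNat)) := by
  rw [pushTo_apply]
  exact Finsupp.sum_single_index (by simp)

def Supported (a : (V × ℤ) →₀ ℕ) (k : ℤ) : Prop := ∀ p ∈ a.support, p.2 ≤ k

lemma exists_supported (a : (V × ℤ) →₀ ℕ) : ∃ k, Supported a k := by
  refine ⟨(a.support.sup fun p => p.2.toNat : ℕ), fun p hp => ?_⟩
  calc p.2 ≤ (p.2.toNat : ℤ) := Int.self_le_toNat _
    _ ≤ _ := by exact_mod_cast Finset.le_sup (f := fun p : V × ℤ => p.2.toNat) hp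

lemma supported_mono {a : (V × ℤ) →₀ ℕ} {k k' : ℤ} (h : Supported a k) (hk : k ≤ k') :
    Supported a k' := fun p hp => le_trans (h p hp) hk

lemma supported_add {a b : (V × ℤ) →₀ ℕ} {k : ℤ} (ha : Supported a k) (hb : Supported b k) :
    Supported (a + b) k := fun p hp => by
  rcases Finset.mem_union.mp (Finsupp.support_add hp) with h | h
  · exact ha p h
  · exact hb p h

lemma pushTo_succ (k : ℤ) (a : (V × ℤ) →₀ ℕ) (h : Supported a k) :
    G.pushTo (k + 1) a = G.pushTo k a ᵥ* G.adj := by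
  classical
  rw [pushTo_apply, pushTo_apply, Finsupp.sum, Finsupp.sum]
  rw [show (∑ p ∈ a.support, (a p) • ((Pi.single p.1 1 : V → ℕ) ᵥ* (G.adj ^ (k - p.2).toNat))) ᵥ* G.adj
      = ∑ p ∈ a.support, ((a p) • ((Pi.single p.1 1 : V → ℕ) ᵥ* (G.adj ^ (k - p.2).toNat))) ᵥ* G.adj
    from map_sum (vecMulHom G.adj) _ _]
  refine Finset.sum_congr rfl fun p hp => ?_
  have hk : (k + 1 - p.2).toNat = (k - p.2).toNat + 1 := by
    have := h p hp; omega
  rw [hk, pow_succ, ← Matrix.vecMul_vecMul, Matrix.smul_vecMul]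

lemma pushTo_shift (k : ℤ) (j : ℕ) (a : (V × ℤ) →₀ ℕ) (h : Supported a k) :
    G.pushTo (k + j) a = G.pushTo k a ᵥ* G.adj ^ j := by
  induction j with
  | zero => simp [Matrix.vecMul_one]
  | succ n ih =>
      have h2 : (k + ((n : ℕ) + 1 : ℕ) : ℤ) = (k + n) + 1 := by push_cast; ring
      rw [h2, G.pushTo_succ _ _ (supported_mono h (by omega)), ih, pow_succ,
        ← Matrix.vecMul_vecMul]

lemma pushTo_of_le {k k' : ℤ} (hk : k ≤ k') (a : (V × ℤ) →₀ ℕ) (ha : Supported a k) :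
    G.pushTo k' a = G.pushTo k a ᵥ* G.adj ^ (k' - k).toNat := by
  have e1 : k' = k + ((k' - k).toNat : ℤ) := by omega
  conv_lhs => rw [e1]
  exact G.pushTo_shift _ _ _ ha

lemma pushTo_rowAt (k k' : ℤ) (x : V → ℕ) :
    G.pushTo k' (rowAt x k) = x ᵥ* G.adj ^ (k' - k).toNat := by
  classical
  rw [rowAt, map_sum]
  have h1 : ∀ v : V, G.pushTo k' (Finsupp.single (v, k) (x v))
      = vecMulHom (G.adj ^ (k' - k).toNat) (Pi.single v (x v)) := by
    intro v
    rw [pushTo_single, vecMulHom_apply]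
    rw [← Matrix.smul_vecMul]
    congr 1
    rw [← Pi.single_smul, smul_eq_mul, mul_one]
  rw [Finset.sum_congr rfl fun v _ => h1 v, ← map_sum]
  rw [Finset.univ_sum_single x, vecMulHom_apply]

lemma supported_rowAt (x : V → ℕ) (k : ℤ) : Supported (rowAt x k) k := by
  intro p hp
  exact le_of_eq (support_rowAt_le x k p hp)


/-- Counting lemma: summing indicator rows of ranges of edges out of `v` gives row `v`
of the adjacency matrix. -/
lemma sum_single_range (v : V) :
    ∑ e ∈ (G.rowFinite_of_finite v).toFinset, Pi.single (G.r e) (1 : ℕ) = G.adj v := by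
  classical
  funext w
  rw [Finset.sum_apply]
  have h1 : ∀ e ∈ (G.rowFinite_of_finite v).toFinset,
      (Pi.single (G.r e) (1 : ℕ) : V → ℕ) w = if w = G.r e then (1:ℕ) else 0 := by
    intro e _
    simp [Pi.single_apply]
  rw [Finset.sum_congr rfl h1, Finset.sum_boole]
  show _ = Nat.card {e : Ed // G.s e = v ∧ G.r e = w}
  rw [Nat.card_eq_fintype_card, Fintype.card_subtype]
  simp only [Nat.cast_id]
  congr 1
  ext e
  simp [Set.Finite.mem_toFinset, eq_comm]

/-- `rowAt` as an additive monoid hom. -/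
noncomputable def rowAtHom (k : ℤ) : (V → ℕ) →+ ((V × ℤ) →₀ ℕ) where
  toFun x := rowAt x k
  map_zero' := by simp [rowAt]
  map_add' x y := rowAt_add x y k

lemma rowAt_sum_range (v : V) (k : ℤ) :
    ∑ e ∈ (G.rowFinite_of_finite v).toFinset, Finsupp.single (G.r e, k) 1
      = rowAt (G.adj v) k := by
  have : ∀ e ∈ (G.rowFinite_of_finite v).toFinset,
      Finsupp.single (G.r e, k) (1:ℕ) = rowAtHom k (Pi.single (G.r e) 1) := by
    intro e _
    show _ = rowAt _ _
    rw [rowAt_single]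
  rw [Finset.sum_congr rfl this, ← map_sum, G.sum_single_range]
  rfl

end DGraph

/-- An `AddCon` respects finite sums of related elements. -/
lemma addCon_sum {M ι : Type*} [AddCommMonoid M] (c : AddCon M) (s : Finset ι)
    (f g : ι → M) (h : ∀ i ∈ s, c (f i) (g i)) :
    c (∑ i ∈ s, f i) (∑ i ∈ s, g i) := by
  classical
  induction s using Finset.induction_on with
  | empty => simpa using c.refl 0
  | insert a s hni ih =>
      rw [Finset.sum_insert hni, Finset.sum_insert hni]
      exact c.add (h a (Finset.mem_insert_self a s))
        (ih fun i hi => h i (Finset.mem_insert_of_mem hi))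

lemma addCon_nsmul {M : Type*} [AddCommMonoid M] (c : AddCon M) (n : ℕ) {a b : M}
    (h : c a b) : c (n • a) (n • b) := by
  induction n with
  | zero => simpa using c.refl 0
  | succ m ih => rw [succ_nsmul, succ_nsmul]; exact c.add ih h

namespace DGraph
variable {V Ed : Type} [Fintype V] [Fintype Ed] [DecidableEq V] (G : DGraph V Ed)

/-- One-step expansion of a whole row, inside the congruence. -/
lemma talCon_rowAt_step (hns : ∀ v : V, ¬ G.IsSink v) (x : V → ℕ) (k : ℤ) :
    (G.talCon G.rowFinite_of_finite) (rowAt x k) (rowAt (x ᵥ* G.adj) (k + 1)) := by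
  classical
  have hx : rowAt x k = ∑ v, x v • Finsupp.single (v, k) (1:ℕ) := by
    rw [rowAt]
    refine Finset.sum_congr rfl fun v _ => ?_
    rw [Finsupp.smul_single, smul_eq_mul, mul_one]
  have hy : rowAt (x ᵥ* G.adj) (k + 1) = ∑ v, x v • rowAt (G.adj v) (k + 1) := by
    have : x ᵥ* G.adj = ∑ v, x v • G.adj v := by
      funext w
      rw [Finset.sum_apply]
      rfl
    rw [this]
    rw [show rowAt (∑ v, x v • G.adj v) (k+1) = rowAtHom (k+1) (∑ v, x v • G.adj v) from rfl]
    rw [map_sum]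
    refine Finset.sum_congr rfl fun v _ => ?_
    show rowAt _ _ = _
    rw [rowAt_smul]
  rw [hx, hy]
  refine addCon_sum _ _ _ _ fun v _ => addCon_nsmul _ _ ?_
  have := AddConGen.Rel.of (r := G.talRel G.rowFinite_of_finite)
    (Finsupp.single (v, k) 1)
    (∑ e ∈ (G.rowFinite_of_finite v).toFinset, Finsupp.single (G.r e, k + 1) 1)
    ⟨v, k, hns v, rfl, rfl⟩
  rwa [G.rowAt_sum_range v (k+1)] at this

/-- The comparison congruence: two free elements are related iff they agree after
being pushed down to a common level. -/
noncomputable def Scon : AddCon ((V × ℤ) →₀ ℕ) where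
  r a b := ∃ k, Supported a k ∧ Supported b k ∧ G.pushTo k a = G.pushTo k b
  iseqv := by
    constructor
    · intro a
      obtain ⟨k, hk⟩ := exists_supported a
      exact ⟨k, hk, hk, rfl⟩
    · rintro a b ⟨k, h1, h2, h3⟩
      exact ⟨k, h2, h1, h3.symm⟩
    · rintro a b c ⟨k1, ha1, hb1, h1⟩ ⟨k2, hb2, hc2, h2⟩
      refine ⟨max k1 k2, supported_mono ha1 (le_max_left _ _),
        supported_mono hc2 (le_max_right _ _), ?_⟩
      calc G.pushTo (max k1 k2) a
          = G.pushTo k1 a ᵥ* G.adj ^ (max k1 k2 - k1).toNat :=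
            G.pushTo_of_le (le_max_left _ _) a ha1
        _ = G.pushTo k1 b ᵥ* G.adj ^ (max k1 k2 - k1).toNat := by rw [h1]
        _ = G.pushTo (max k1 k2) b := (G.pushTo_of_le (le_max_left _ _) b hb1).symm
        _ = G.pushTo k2 b ᵥ* G.adj ^ (max k1 k2 - k2).toNat :=
            G.pushTo_of_le (le_max_right _ _) b hb2
        _ = G.pushTo k2 c ᵥ* G.adj ^ (max k1 k2 - k2).toNat := by rw [h2]
        _ = G.pushTo (max k1 k2) c := (G.pushTo_of_le (le_max_right _ _) c hc2).symm
  add' := by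
    rintro a b c d ⟨k1, ha1, hb1, h1⟩ ⟨k2, hc2, hd2, h2⟩
    refine ⟨max k1 k2, supported_add (supported_mono ha1 (le_max_left _ _))
        (supported_mono hc2 (le_max_right _ _)),
      supported_add (supported_mono hb1 (le_max_left _ _))
        (supported_mono hd2 (le_max_right _ _)), ?_⟩
    have pa : G.pushTo (max k1 k2) a = G.pushTo (max k1 k2) b := by
      rw [G.pushTo_of_le (le_max_left k1 k2) a ha1, G.pushTo_of_le (le_max_left k1 k2) b hb1, h1]
    have pc : G.pushTo (max k1 k2) c = G.pushTo (max k1 k2) d := by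
      rw [G.pushTo_of_le (le_max_right k1 k2) c hc2, G.pushTo_of_le (le_max_right k1 k2) d hd2, h2]
    rw [map_add, map_add, pa, pc]

lemma talCon_le_Scon : G.talCon G.rowFinite_of_finite ≤ G.Scon := by
  apply AddCon.addConGen_le.mpr
  rintro a b ⟨v, i, hv, rfl, rfl⟩
  refine ⟨i + 1, ?_, ?_, ?_⟩
  · intro p hp
    have := Finsupp.support_single_subset hp
    simp only [Finset.mem_singleton] at this
    subst this; simp
  · intro p hp
    have := Finsupp.support_finset_sum hp
    rw [Finset.mem_biUnion] at this
    obtain ⟨e, _, he⟩ := this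
    have := Finsupp.support_single_subset he
    simp only [Finset.mem_singleton] at this
    subst this; simp
  · rw [G.pushTo_single]
    rw [map_sum]
    have : ∀ e ∈ (G.rowFinite_of_finite v).toFinset,
        G.pushTo (i+1) (Finsupp.single (G.r e, i + 1) 1)
          = Pi.single (G.r e) (1:ℕ) := by
      intro e _
      rw [G.pushTo_single]
      simp [Matrix.vecMul_one]
    rw [Finset.sum_congr rfl this, G.sum_single_range]
    simp [pow_one, Matrix.single_one_vecMul]
    rfl

/-- The class of the row vector `x` at level `k` in the talented monoid. -/
noncomputable def mkRow (x : V → ℕ) (k : ℤ) : G.Tal G.rowFinite_of_finite :=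
  (G.talCon G.rowFinite_of_finite).mk' (rowAt x k)

lemma mkRow_add (x y : V → ℕ) (k : ℤ) : G.mkRow (x + y) k = G.mkRow x k + G.mkRow y k := by
  rw [mkRow, rowAt_add, map_add]; rfl

lemma mkRow_smul (n : ℕ) (x : V → ℕ) (k : ℤ) : G.mkRow (n • x) k = n • G.mkRow x k := by
  rw [mkRow, rowAt_smul, map_nsmul]; rfl

lemma mkRow_single (v : V) (k : ℤ) :
    G.mkRow (Pi.single v 1) k = G.gen G.rowFinite_of_finite v k := by
  rw [mkRow, rowAt_single]; rfl

lemma mkRow_eq_sum (x : V → ℕ) (k : ℤ) :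
    G.mkRow x k = ∑ v, x v • G.gen G.rowFinite_of_finite v k := by
  calc G.mkRow x k = G.mkRow (∑ v, Pi.single v (x v)) k := by rw [Finset.univ_sum_single]
    _ = ∑ v, x v • G.gen G.rowFinite_of_finite v k := by
        rw [show ∀ y, G.mkRow y k = ((G.talCon G.rowFinite_of_finite).mk'.comp (rowAtHom k)) y
          from fun y => rfl]
        rw [map_sum]
        refine Finset.sum_congr rfl fun v _ => ?_
        show G.mkRow (Pi.single v (x v)) k = _
        rw [show (Pi.single v (x v) : V → ℕ) = x v • Pi.single v 1 by
          rw [← Pi.single_smul, smul_eq_mul, mul_one], mkRow_smul, mkRow_single]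

lemma mkRow_step (hns : ∀ v : V, ¬ G.IsSink v) (x : V → ℕ) (k : ℤ) :
    G.mkRow x k = G.mkRow (x ᵥ* G.adj) (k + 1) :=
  (AddCon.eq _).mpr (G.talCon_rowAt_step hns x k)

lemma mkRow_pow (hns : ∀ v : V, ¬ G.IsSink v) (x : V → ℕ) (k : ℤ) (j : ℕ) :
    G.mkRow x k = G.mkRow (x ᵥ* G.adj ^ j) (k + j) := by
  induction j with
  | zero => simp [Matrix.vecMul_one]
  | succ n ih =>
      rw [ih, G.mkRow_step hns, pow_succ, ← Matrix.vecMul_vecMul]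
      congr 1
      push_cast; ring

lemma shift_mk' (n : ℤ) (a : (V × ℤ) →₀ ℕ) :
    G.shift G.rowFinite_of_finite n ((G.talCon G.rowFinite_of_finite).mk' a)
      = (G.talCon G.rowFinite_of_finite).mk'
          (Finsupp.mapDomain (fun p : V × ℤ => (p.1, p.2 + n)) a) := rfl

lemma shift_mkRow (n : ℤ) (x : V → ℕ) (k : ℤ) :
    G.shift G.rowFinite_of_finite n (G.mkRow x k) = G.mkRow x (k + n) := by
  rw [mkRow, mkRow, shift_mk']
  congr 1
  rw [rowAt, Finsupp.mapDomain_finset_sum]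
  refine Finset.sum_congr rfl fun v _ => ?_
  rw [Finsupp.mapDomain_single]

lemma shift_gen (n : ℤ) (v : V) (i : ℤ) :
    G.shift G.rowFinite_of_finite n (G.gen G.rowFinite_of_finite v i)
      = G.gen G.rowFinite_of_finite v (i + n) := by
  rw [← G.mkRow_single, shift_mkRow, G.mkRow_single]

/-- Injectivity: equal single-level classes become equal vectors after enough steps. -/
lemma exists_vecMul_eq {x y : V → ℕ} {k : ℤ} (h : G.mkRow x k = G.mkRow y k) :
    ∃ n, ∀ m ≥ n, x ᵥ* G.adj ^ m = y ᵥ* G.adj ^ m := by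
  have hc : (G.talCon G.rowFinite_of_finite) (rowAt x k) (rowAt y k) := (AddCon.eq _).mp h
  obtain ⟨k', _, _, hp⟩ := G.talCon_le_Scon hc
  rw [G.pushTo_rowAt, G.pushTo_rowAt] at hp
  refine ⟨(k' - k).toNat, fun m hm => ?_⟩
  have : m = (k' - k).toNat + (m - (k' - k).toNat) := by omega
  rw [this, pow_add, ← Matrix.vecMul_vecMul, ← Matrix.vecMul_vecMul, hp]

end DGraph

namespace DGraph
variable {V Ed : Type} [Fintype V] [Fintype Ed] [DecidableEq V] (G : DGraph V Ed)

/-- Every free element equals its pushdown, in the quotient. -/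
lemma mk'_eq_mkRow (hns : ∀ v : V, ¬ G.IsSink v) {a : (V × ℤ) →₀ ℕ} {k : ℤ}
    (hk : Supported a k) :
    (G.talCon G.rowFinite_of_finite).mk' a = G.mkRow (G.pushTo k a) k := by
  classical
  conv_lhs => rw [← Finsupp.sum_single a]
  rw [Finsupp.sum, map_sum, pushTo_apply, Finsupp.sum]
  rw [show ∀ y, G.mkRow y k = ((G.talCon G.rowFinite_of_finite).mk'.comp (rowAtHom k)) y
    from fun y => rfl]
  rw [map_sum]
  refine Finset.sum_congr rfl fun p hp => ?_
  show _ = G.mkRow _ k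
  have hpk := hk p hp
  have h1 : Finsupp.single p (a p) = a p • Finsupp.single p 1 := by
    rw [Finsupp.smul_single, smul_eq_mul, mul_one]
  have h2 : (G.talCon G.rowFinite_of_finite).mk' (Finsupp.single p 1)
      = G.mkRow (Pi.single p.1 1) p.2 := by
    rw [G.mkRow_single]; rfl
  have h3 : p.2 + ((k - p.2).toNat : ℤ) = k := by omega
  rw [h1, map_nsmul, h2, G.mkRow_pow hns _ _ ((k - p.2).toNat), h3]
  exact (G.mkRow_smul _ _ _).symm

/-- Every element of the talented monoid is a single-level row class. -/
lemma exists_mkRow (hns : ∀ v : V, ¬ G.IsSink v) (t : G.Tal G.rowFinite_of_finite) :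
    ∃ x k, t = G.mkRow x k := by
  obtain ⟨a, rfl⟩ := AddCon.mk'_surjective t
  obtain ⟨k, hk⟩ := exists_supported a
  exact ⟨G.pushTo k a, k, G.mk'_eq_mkRow hns hk⟩

/-- `mkRow` of a finite sum of rows. -/
lemma mkRow_sum {ι : Type} (s : Finset ι) (f : ι → V → ℕ) (k : ℤ) :
    G.mkRow (∑ i ∈ s, f i) k = ∑ i ∈ s, G.mkRow (f i) k := by
  rw [show ∀ y, G.mkRow y k = ((G.talCon G.rowFinite_of_finite).mk'.comp (rowAtHom k)) y
    from fun y => rfl]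
  rw [map_sum]
  rfl

end DGraph

/-- Decomposing `vecMul` as a sum of scaled rows. -/
lemma vecMul_eq_sum_smul_rows {V W : Type} [Fintype V] (x : V → ℕ) (M : Matrix V W ℕ) :
    x ᵥ* M = ∑ v, x v • M v := by
  funext w
  rw [Finset.sum_apply]
  rfl

/-- Two matrices with equal row actions are equal. -/
lemma matrix_eq_of_rows {V W : Type} [Fintype V] [DecidableEq V] {M N : Matrix V W ℕ}
    (h : ∀ v, (Pi.single v 1 : V → ℕ) ᵥ* M = (Pi.single v 1 : V → ℕ) ᵥ* N) : M = N := by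
  ext v w
  have := congrFun (h v) w
  rwa [Matrix.single_one_vecMul, Matrix.single_one_vecMul] at this

/-- For finite graphs with no sinks, a ℤ-monoid isomorphism of the
talented monoids implies that the adjacency matrices are shift equivalent: there are
`l ≥ 1` and nonnegative integer matrices `R, S` with `A_E R = R A_F`, `S A_E = A_F S`,
`A_E^l = RS` and `A_F^l = SR`. -/
theorem statement5 {V₁ E₁ V₂ E₂ : Type} [Fintype V₁] [Fintype E₁] [Fintype V₂] [Fintype E₂]
    [DecidableEq V₁] [DecidableEq V₂]
    (G : DGraph V₁ E₁) (H : DGraph V₂ E₂)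
    (hG : ∀ v, ¬ G.IsSink v) (hH : ∀ v, ¬ H.IsSink v)
    (hiso : ∃ φ : G.Tal G.rowFinite_of_finite ≃+ H.Tal H.rowFinite_of_finite,
      ∀ (n : ℤ) (x : G.Tal G.rowFinite_of_finite),
        φ (G.shift G.rowFinite_of_finite n x) = H.shift H.rowFinite_of_finite n (φ x)) :
    ∃ l : ℕ, 0 < l ∧ ∃ (R : Matrix V₁ V₂ ℕ) (S : Matrix V₂ V₁ ℕ),
      G.adj * R = R * H.adj ∧ S * G.adj = H.adj * S ∧
        G.adj ^ l = R * S ∧ H.adj ^ l = S * R := by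
  classical
  obtain ⟨φ, hφ⟩ := hiso
  -- equivariance of the inverse
  have hψ : ∀ (n : ℤ) (y : H.Tal H.rowFinite_of_finite),
      φ.symm (H.shift H.rowFinite_of_finite n y) = G.shift G.rowFinite_of_finite n (φ.symm y) := by
    intro n y
    apply φ.injective
    rw [φ.apply_symm_apply, hφ, φ.apply_symm_apply]
  -- represent φ and φ.symm on generators at common levels K, L ≥ 1
  choose x₀ k₀ hx₀ using fun v : V₁ => H.exists_mkRow hH (φ (G.gen G.rowFinite_of_finite v 0))
  choose y₀ l₀ hy₀ using fun w : V₂ => G.exists_mkRow hG (φ.symm (H.gen H.rowFinite_of_finite w 0))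
  obtain ⟨K, hK1, hKk⟩ : ∃ K : ℤ, 1 ≤ K ∧ ∀ v, k₀ v ≤ K := by
    refine ⟨(max 1 (Finset.univ.sup fun v => (k₀ v).toNat) : ℕ), by exact_mod_cast le_max_left 1 _,
      fun v => ?_⟩
    have h0 : (k₀ v).toNat ≤ Finset.univ.sup fun v => (k₀ v).toNat :=
      Finset.le_sup (f := fun v => (k₀ v).toNat) (Finset.mem_univ v)
    have h1 : (Finset.univ.sup fun v => (k₀ v).toNat) ≤ max 1 (Finset.univ.sup fun v => (k₀ v).toNat) :=
      le_max_right _ _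
    omega
  obtain ⟨L, hL1, hLl⟩ : ∃ L : ℤ, 1 ≤ L ∧ ∀ w, l₀ w ≤ L := by
    refine ⟨(max 1 (Finset.univ.sup fun w => (l₀ w).toNat) : ℕ), by exact_mod_cast le_max_left 1 _,
      fun w => ?_⟩
    have h0 : (l₀ w).toNat ≤ Finset.univ.sup fun w => (l₀ w).toNat :=
      Finset.le_sup (f := fun w => (l₀ w).toNat) (Finset.mem_univ w)
    have h1 : (Finset.univ.sup fun w => (l₀ w).toNat) ≤ max 1 (Finset.univ.sup fun w => (l₀ w).toNat) :=
      le_max_right _ _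
    omega
  have hRmdef : ∀ v, ∃ r : V₂ → ℕ, φ (G.gen G.rowFinite_of_finite v 0) = H.mkRow r K := by
    intro v
    refine ⟨x₀ v ᵥ* H.adj ^ (K - k₀ v).toNat, ?_⟩
    rw [hx₀ v, H.mkRow_pow hH (x₀ v) (k₀ v) (K - k₀ v).toNat]
    congr 1
    have := hKk v; omega
  have hSmdef : ∀ w, ∃ s : V₁ → ℕ, φ.symm (H.gen H.rowFinite_of_finite w 0) = G.mkRow s L := by
    intro w
    refine ⟨y₀ w ᵥ* G.adj ^ (L - l₀ w).toNat, ?_⟩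
    rw [hy₀ w, G.mkRow_pow hG (y₀ w) (l₀ w) (L - l₀ w).toNat]
    congr 1
    have := hLl w; omega
  choose Rf hgenR using hRmdef
  choose Sf hgenS using hSmdef
  set Rm : Matrix V₁ V₂ ℕ := Matrix.of Rf with hRmeq
  set Sm : Matrix V₂ V₁ ℕ := Matrix.of Sf with hSmeq
  -- φ and φ.symm on arbitrary rows
  have hrowR : ∀ (x : V₁ → ℕ) (k : ℤ), φ (G.mkRow x k) = H.mkRow (x ᵥ* Rm) (K + k) := by
    intro x k
    rw [G.mkRow_eq_sum, map_sum]
    have h1 : ∀ v : V₁, φ (x v • G.gen G.rowFinite_of_finite v k)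
        = H.mkRow (x v • Rm v) (K + k) := by
      intro v
      rw [map_nsmul, H.mkRow_smul]
      congr 1
      have hg : G.gen G.rowFinite_of_finite v k
          = G.shift G.rowFinite_of_finite k (G.gen G.rowFinite_of_finite v 0) := by
        rw [G.shift_gen]; norm_num
      rw [hg, hφ, hgenR, H.shift_mkRow]
      rfl
    rw [Finset.sum_congr rfl fun v _ => h1 v, ← H.mkRow_sum, ← vecMul_eq_sum_smul_rows]
  have hrowS : ∀ (y : V₂ → ℕ) (k : ℤ), φ.symm (H.mkRow y k) = G.mkRow (y ᵥ* Sm) (L + k) := by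
    intro y k
    rw [H.mkRow_eq_sum, map_sum]
    have h1 : ∀ w : V₂, φ.symm (y w • H.gen H.rowFinite_of_finite w k)
        = G.mkRow (y w • Sm w) (L + k) := by
      intro w
      rw [map_nsmul, G.mkRow_smul]
      congr 1
      have hg : H.gen H.rowFinite_of_finite w k
          = H.shift H.rowFinite_of_finite k (H.gen H.rowFinite_of_finite w 0) := by
        rw [H.shift_gen]; norm_num
      rw [hg, hψ, hgenS, G.shift_mkRow]
      rfl
    rw [Finset.sum_congr rfl fun w _ => h1 w, ← G.mkRow_sum, ← vecMul_eq_sum_smul_rows]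
  have hgen0 : ∀ v : V₁, G.gen G.rowFinite_of_finite v 0 = G.mkRow (Pi.single v 1) 0 :=
    fun v => (G.mkRow_single v 0).symm
  have hgen0' : ∀ w : V₂, H.gen H.rowFinite_of_finite w 0 = H.mkRow (Pi.single w 1) 0 :=
    fun w => (H.mkRow_single w 0).symm
  -- Key identity 1: A·Rm ≈ Rm·B
  have key1 : ∃ N : ℕ, ∀ m ≥ N, G.adj * Rm * H.adj ^ m = Rm * H.adj ^ (m + 1) := by
    have h1 : ∀ v : V₁, H.mkRow ((Pi.single v 1 : V₁ → ℕ) ᵥ* (G.adj * Rm)) (K + 1)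
        = H.mkRow ((Pi.single v 1 : V₁ → ℕ) ᵥ* (Rm * H.adj)) (K + 1) := by
      intro v
      calc H.mkRow ((Pi.single v 1 : V₁ → ℕ) ᵥ* (G.adj * Rm)) (K + 1)
          = H.mkRow (((Pi.single v 1 : V₁ → ℕ) ᵥ* G.adj) ᵥ* Rm) (K + 1) := by
            rw [Matrix.vecMul_vecMul]
        _ = φ (G.mkRow ((Pi.single v 1 : V₁ → ℕ) ᵥ* G.adj) 1) := (hrowR _ 1).symm
        _ = φ (G.mkRow (Pi.single v 1) 0) := by
            rw [show G.mkRow ((Pi.single v 1 : V₁ → ℕ) ᵥ* G.adj) 1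
                = G.mkRow (Pi.single v 1) 0 from by
              rw [G.mkRow_step hG (Pi.single v 1) 0]; norm_num]
        _ = H.mkRow ((Pi.single v 1 : V₁ → ℕ) ᵥ* Rm) (K + 0) := hrowR _ 0
        _ = H.mkRow (((Pi.single v 1 : V₁ → ℕ) ᵥ* Rm) ᵥ* H.adj) (K + 0 + 1) :=
            H.mkRow_step hH _ _
        _ = H.mkRow ((Pi.single v 1 : V₁ → ℕ) ᵥ* (Rm * H.adj)) (K + 1) := by
            rw [Matrix.vecMul_vecMul]
            congr 1
            ring
    choose n hn using fun v => H.exists_vecMul_eq (h1 v)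
    refine ⟨Finset.univ.sup n, fun m hm => ?_⟩
    apply matrix_eq_of_rows
    intro v
    have h2 := hn v m (le_trans (Finset.le_sup (Finset.mem_univ v)) hm)
    rw [Matrix.vecMul_vecMul, Matrix.vecMul_vecMul] at h2
    rw [h2, Matrix.mul_assoc, pow_succ']
  -- Key identity 2: B·Sm ≈ Sm·A
  have key2 : ∃ N : ℕ, ∀ m ≥ N, H.adj * Sm * G.adj ^ m = Sm * G.adj ^ (m + 1) := by
    have h1 : ∀ w : V₂, G.mkRow ((Pi.single w 1 : V₂ → ℕ) ᵥ* (H.adj * Sm)) (L + 1)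
        = G.mkRow ((Pi.single w 1 : V₂ → ℕ) ᵥ* (Sm * G.adj)) (L + 1) := by
      intro w
      calc G.mkRow ((Pi.single w 1 : V₂ → ℕ) ᵥ* (H.adj * Sm)) (L + 1)
          = G.mkRow (((Pi.single w 1 : V₂ → ℕ) ᵥ* H.adj) ᵥ* Sm) (L + 1) := by
            rw [Matrix.vecMul_vecMul]
        _ = φ.symm (H.mkRow ((Pi.single w 1 : V₂ → ℕ) ᵥ* H.adj) 1) := (hrowS _ 1).symm
        _ = φ.symm (H.mkRow (Pi.single w 1) 0) := by
            rw [show H.mkRow ((Pi.single w 1 : V₂ → ℕ) ᵥ* H.adj) 1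
                = H.mkRow (Pi.single w 1) 0 from by
              rw [H.mkRow_step hH (Pi.single w 1) 0]; norm_num]
        _ = G.mkRow ((Pi.single w 1 : V₂ → ℕ) ᵥ* Sm) (L + 0) := hrowS _ 0
        _ = G.mkRow (((Pi.single w 1 : V₂ → ℕ) ᵥ* Sm) ᵥ* G.adj) (L + 0 + 1) :=
            G.mkRow_step hG _ _
        _ = G.mkRow ((Pi.single w 1 : V₂ → ℕ) ᵥ* (Sm * G.adj)) (L + 1) := by
            rw [Matrix.vecMul_vecMul]
            congr 1
            ring
    choose n hn using fun w => G.exists_vecMul_eq (h1 w)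
    refine ⟨Finset.univ.sup n, fun m hm => ?_⟩
    apply matrix_eq_of_rows
    intro w
    have h2 := hn w m (le_trans (Finset.le_sup (Finset.mem_univ w)) hm)
    rw [Matrix.vecMul_vecMul, Matrix.vecMul_vecMul] at h2
    rw [h2, Matrix.mul_assoc, pow_succ']
  -- the lag
  set lN : ℕ := (L + K).toNat with hlN
  have hlK : ((lN : ℕ) : ℤ) = L + K := by omega
  -- Key identity 3: Rm·Sm ≈ A^lN
  have key3 : ∃ N : ℕ, ∀ m ≥ N, Rm * Sm * G.adj ^ m = G.adj ^ (lN + m) := by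
    have h1 : ∀ v : V₁, G.mkRow ((Pi.single v 1 : V₁ → ℕ) ᵥ* (Rm * Sm)) (L + (K + 0))
        = G.mkRow ((Pi.single v 1 : V₁ → ℕ) ᵥ* G.adj ^ lN) (L + (K + 0)) := by
      intro v
      calc G.mkRow ((Pi.single v 1 : V₁ → ℕ) ᵥ* (Rm * Sm)) (L + (K + 0))
          = G.mkRow (((Pi.single v 1 : V₁ → ℕ) ᵥ* Rm) ᵥ* Sm) (L + (K + 0)) := by
            rw [Matrix.vecMul_vecMul]
        _ = φ.symm (H.mkRow ((Pi.single v 1 : V₁ → ℕ) ᵥ* Rm) (K + 0)) := (hrowS _ (K + 0)).symm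
        _ = φ.symm (φ (G.mkRow (Pi.single v 1) 0)) := by rw [← hrowR]
        _ = G.mkRow (Pi.single v 1) 0 := φ.symm_apply_apply _
        _ = G.mkRow ((Pi.single v 1 : V₁ → ℕ) ᵥ* G.adj ^ lN) (0 + lN) := G.mkRow_pow hG _ 0 lN
        _ = G.mkRow ((Pi.single v 1 : V₁ → ℕ) ᵥ* G.adj ^ lN) (L + (K + 0)) := by
            congr 1
            omega
    choose n hn using fun v => G.exists_vecMul_eq (h1 v)
    refine ⟨Finset.univ.sup n, fun m hm => ?_⟩
    apply matrix_eq_of_rows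
    intro v
    have h2 := hn v m (le_trans (Finset.le_sup (Finset.mem_univ v)) hm)
    rw [Matrix.vecMul_vecMul, Matrix.vecMul_vecMul] at h2
    rw [h2, ← pow_add]
  -- Key identity 4: Sm·Rm ≈ B^lN
  have key4 : ∃ N : ℕ, ∀ m ≥ N, Sm * Rm * H.adj ^ m = H.adj ^ (lN + m) := by
    have h1 : ∀ w : V₂, H.mkRow ((Pi.single w 1 : V₂ → ℕ) ᵥ* (Sm * Rm)) (K + (L + 0))
        = H.mkRow ((Pi.single w 1 : V₂ → ℕ) ᵥ* H.adj ^ lN) (K + (L + 0)) := by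
      intro w
      calc H.mkRow ((Pi.single w 1 : V₂ → ℕ) ᵥ* (Sm * Rm)) (K + (L + 0))
          = H.mkRow (((Pi.single w 1 : V₂ → ℕ) ᵥ* Sm) ᵥ* Rm) (K + (L + 0)) := by
            rw [Matrix.vecMul_vecMul]
        _ = φ (G.mkRow ((Pi.single w 1 : V₂ → ℕ) ᵥ* Sm) (L + 0)) := (hrowR _ (L + 0)).symm
        _ = φ (φ.symm (H.mkRow (Pi.single w 1) 0)) := by rw [← hrowS]
        _ = H.mkRow (Pi.single w 1) 0 := φ.apply_symm_apply _
        _ = H.mkRow ((Pi.single w 1 : V₂ → ℕ) ᵥ* H.adj ^ lN) (0 + lN) := H.mkRow_pow hH _ 0 lN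
        _ = H.mkRow ((Pi.single w 1 : V₂ → ℕ) ᵥ* H.adj ^ lN) (K + (L + 0)) := by
            congr 1
            omega
    choose n hn using fun w => H.exists_vecMul_eq (h1 w)
    refine ⟨Finset.univ.sup n, fun m hm => ?_⟩
    apply matrix_eq_of_rows
    intro w
    have h2 := hn w m (le_trans (Finset.le_sup (Finset.mem_univ w)) hm)
    rw [Matrix.vecMul_vecMul, Matrix.vecMul_vecMul] at h2
    rw [h2, ← pow_add]
  obtain ⟨N1, hN1⟩ := key1
  obtain ⟨N2, hN2⟩ := key2
  obtain ⟨N3, hN3⟩ := key3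
  obtain ⟨N4, hN4⟩ := key4
  set N : ℕ := max (max N1 N2) (max N3 N4) with hN
  have hN1' : ∀ m ≥ N, G.adj * Rm * H.adj ^ m = Rm * H.adj ^ (m + 1) :=
    fun m hm => hN1 m (by omega)
  have hN2' : ∀ m ≥ N, H.adj * Sm * G.adj ^ m = Sm * G.adj ^ (m + 1) :=
    fun m hm => hN2 m (by omega)
  -- shifted intertwining for powers
  have pow1 : ∀ (j : ℕ) (m : ℕ), N ≤ m → G.adj ^ j * Rm * H.adj ^ m = Rm * H.adj ^ (m + j) := by
    intro j
    induction j with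
    | zero => intro m _; simp
    | succ i ih =>
        intro m hm
        calc G.adj ^ (i + 1) * Rm * H.adj ^ m
            = G.adj ^ i * (G.adj * Rm * H.adj ^ m) := by
              simp only [pow_succ, Matrix.mul_assoc]
          _ = G.adj ^ i * (Rm * H.adj ^ (m + 1)) := by rw [hN1' m hm]
          _ = G.adj ^ i * Rm * H.adj ^ (m + 1) := by simp only [Matrix.mul_assoc]
          _ = Rm * H.adj ^ (m + 1 + i) := ih (m + 1) (by omega)
          _ = Rm * H.adj ^ (m + (i + 1)) := by rw [show m + 1 + i = m + (i + 1) from by omega]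
  have pow2 : ∀ (j : ℕ) (m : ℕ), N ≤ m → H.adj ^ j * Sm * G.adj ^ m = Sm * G.adj ^ (m + j) := by
    intro j
    induction j with
    | zero => intro m _; simp
    | succ i ih =>
        intro m hm
        calc H.adj ^ (i + 1) * Sm * G.adj ^ m
            = H.adj ^ i * (H.adj * Sm * G.adj ^ m) := by
              simp only [pow_succ, Matrix.mul_assoc]
          _ = H.adj ^ i * (Sm * G.adj ^ (m + 1)) := by rw [hN2' m hm]
          _ = H.adj ^ i * Sm * G.adj ^ (m + 1) := by simp only [Matrix.mul_assoc]
          _ = Sm * G.adj ^ (m + 1 + i) := ih (m + 1) (by omega)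
          _ = Sm * G.adj ^ (m + (i + 1)) := by rw [show m + 1 + i = m + (i + 1) from by omega]
  refine ⟨lN + 2 * N, by omega, Rm * H.adj ^ N, Sm * G.adj ^ N, ?_, ?_, ?_, ?_⟩
  · -- A (Rm B^N) = (Rm B^N) B
    calc G.adj * (Rm * H.adj ^ N) = G.adj * Rm * H.adj ^ N := (Matrix.mul_assoc _ _ _).symm
      _ = Rm * H.adj ^ (N + 1) := hN1' N le_rfl
      _ = Rm * H.adj ^ N * H.adj := by simp only [pow_succ, Matrix.mul_assoc]
  · -- (Sm A^N) A = B (Sm A^N)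
    calc Sm * G.adj ^ N * G.adj = Sm * G.adj ^ (N + 1) := by simp only [pow_succ, Matrix.mul_assoc]
      _ = H.adj * Sm * G.adj ^ N := (hN2' N le_rfl).symm
      _ = H.adj * (Sm * G.adj ^ N) := Matrix.mul_assoc _ _ _
  · calc G.adj ^ (lN + 2 * N) = G.adj ^ (lN + (N + N)) := by rw [two_mul]
      _ = Rm * Sm * G.adj ^ (N + N) := (hN3 (N + N) (by omega)).symm
      _ = Rm * (Sm * G.adj ^ (N + N)) := Matrix.mul_assoc _ _ _
      _ = Rm * (H.adj ^ N * Sm * G.adj ^ N) := by rw [pow2 N N le_rfl]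
      _ = Rm * H.adj ^ N * (Sm * G.adj ^ N) := by simp only [Matrix.mul_assoc]
  · calc H.adj ^ (lN + 2 * N) = H.adj ^ (lN + (N + N)) := by rw [two_mul]
      _ = Sm * Rm * H.adj ^ (N + N) := (hN4 (N + N) (by omega)).symm
      _ = Sm * (Rm * H.adj ^ (N + N)) := Matrix.mul_assoc _ _ _
      _ = Sm * (G.adj ^ N * Rm * H.adj ^ N) := by rw [pow1 N N le_rfl]
      _ = Sm * G.adj ^ N * (Rm * H.adj ^ N) := by simp only [Matrix.mul_assoc]
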